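/- arXiv:1511.06404 — 3 statements merged into one kernel-verified Lean document; each statement's English description precedes it below -/
import Mathlib

section
/- Let S ⊂ ℤ_p be a set of exactly p points and let μ_S = ∑_{s∈S} δ_s be the sum of Dirac measures at the points of S. For ξ ∈ ℚ_p, the Fourier transform μ̂_S(ξ) = ∑_{s∈S} e^{−2πi{sξ}} vanishes if and only if |(s − s′)ξ|_p = p for all distinct s, s′ ∈ S. -/
open MeasureTheory Complex

noncomputable section

namespace PadicTiling

variable (p : ℕ) [hp : Fact p.Prime]

instance : MeasurableSpace ℚ_[p] := borel _
instance : BorelSpace ℚ_[p] := ⟨rfl⟩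

/-- The closed unit ball of `ℚ_[p]` (the set `ℤ_p`) as a positive compact set. -/
def unitBall : TopologicalSpace.PositiveCompacts ℚ_[p] where
  carrier := Metric.closedBall 0 1
  isCompact' := isCompact_closedBall 0 1
  interior_nonempty' := ⟨0, mem_interior_iff_mem_nhds.mpr (Metric.closedBall_mem_nhds 0 one_pos)⟩

/-- The Haar measure on `ℚ_[p]` normalized so that `ℤ_p` has measure `1`. -/
def mHaar : Measure ℚ_[p] := Measure.addHaarMeasure (unitBall p)

/-- `ℤ_p` as a subset of `ℚ_[p]`. -/
def Zp : Set ℚ_[p] := {x : ℚ_[p] | ‖x‖ ≤ 1}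

/-- The fractional part `{x}` of a `p`-adic number: the rational number
`∑_{n=v}^{-1} a_n p^n` given by the negative-power part of the digit expansion. -/
def padicFract (x : ℚ_[p]) : ℚ :=
  ((PadicInt.toZModPow ((-x.valuation).toNat)
      (⟨x * (p : ℚ_[p]) ^ ((-x.valuation).toNat), by
        rcases eq_or_ne x 0 with hx | hx
        · simp [hx]
        · have hp1 : (1 : ℝ) < p := Nat.one_lt_cast.mpr hp.out.one_lt
          rw [norm_mul, Padic.norm_eq_zpow_neg_valuation hx, Padic.norm_p_pow,
            ← zpow_add₀ (by positivity : (p : ℝ) ≠ 0)]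
          apply zpow_le_one_of_nonpos₀ (le_of_lt hp1) (by omega)
          ⟩ : ℤ_[p])).val : ℚ) / (p : ℚ) ^ ((-x.valuation).toNat)

/-- The standard additive character `χ(x) = e^{2πi {x}}` of `ℚ_[p]`. -/
def padicChar (x : ℚ_[p]) : ℂ :=
  Complex.exp (2 * Real.pi * Complex.I * (padicFract p x : ℂ))

end PadicTiling

/-!
Each term is `χ(-sξ)` for the additive character `χ = e^{2πi{·}}` of `ℚ_p`, whose kernel is
exactly `ℤ_p`. Hence all terms are `p^N`-th roots of unity for `N` large, and for `x ∈ ℚ_p` the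
value `χ(x)` is a primitive `p`-th root of unity iff `|x|_p = p`; since `χ(-sξ)/χ(-s'ξ) =
χ((s' - s)ξ)`, the theorem says that `p` roots of unity `ζ^{a_s}` of `p`-power order sum to zero
iff their pairwise ratios are primitive `p`-th roots of unity.

If `∑ ζ^{a_s} = 0` with `ζ` a primitive `p^{N+1}`-th root, then `Φ_{p^{N+1}} = Φ_p(X^{p^N})`
divides `F = ∑ X^{a_s}`, so `F = Φ_{p^{N+1}} R` with `deg R < p^N`. The coefficients of `F`,
which count the exponents, are therefore `p^N`-periodic, and evaluating at `1` gives
`p = p · R(1)`: one period holds a single exponent. So the `a_s` are `p` distinct numbers in one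
residue class mod `p^N`. Conversely, `p` values with pairwise primitive `p`-th root ratios are a
rotation of all `p`-th roots of unity, whose sum is zero.
-/

section VanishingSums

open Polynomial Finset

theorem IsPrimitiveRoot.sum_nthRootsFinset_eq_zero {R : Type*} [CommRing R] [IsDomain R]
    {ζ : R} {n : ℕ} (hζ : IsPrimitiveRoot ζ n) (hn : 1 < n) :
    ∑ x ∈ nthRootsFinset n (1 : R), x = 0 := by
  have h := prod_X_sub_C_coeff_card_pred (nthRootsFinset n (1 : R)) id
    (by rw [hζ.card_nthRootsFinset]; omega)
  simp only [id] at h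
  rw [hζ.card_nthRootsFinset, ← X_pow_sub_one_eq_prod (by omega) hζ] at h
  simpa [coeff_X_pow, coeff_one, show n - 1 ≠ n by omega, show n - 1 ≠ 0 by omega] using h.symm

theorem sum_eq_zero_of_forall_isPrimitiveRoot_div {K : Type*} [Field K] {ι : Type*} [Fintype ι]
    {n : ℕ} (hn : 1 < n) (hcard : Fintype.card ι = n) {f : ι → K}
    (hf : ∀ i j, i ≠ j → IsPrimitiveRoot (f i / f j) n) : ∑ i, f i = 0 := by
  classical
  have hf0 : ∀ i, f i ≠ 0 := fun i h => by
    obtain ⟨i', hi'⟩ := Fintype.exists_ne_of_one_lt_card (hcard ▸ hn) i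
    exact (hf i' i hi').ne_zero (by omega) (by simp [h])
  have hinj : Function.Injective f := fun i i' h => by
    by_contra hne
    exact (hf i i' hne).ne_one hn (by rw [h, div_self (hf0 i')])
  obtain ⟨j⟩ : Nonempty ι := Fintype.card_pos_iff.mp (hcard ▸ (by omega))
  obtain ⟨i₁, hi₁⟩ := Fintype.exists_ne_of_one_lt_card (hcard ▸ hn) j
  have hratio : univ.image (f · / f j) = nthRootsFinset n (1 : K) := by
    refine eq_of_subset_of_card_le (fun x hx => ?_) ?_
    · obtain ⟨i, -, rfl⟩ := mem_image.mp hx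
      rw [mem_nthRootsFinset (by omega)]
      rcases eq_or_ne i j with rfl | hij
      · rw [div_self (hf0 i), one_pow]
      · exact (hf i j hij).pow_eq_one
    · rw [(hf i₁ j hi₁).card_nthRootsFinset, card_image_of_injective _
        fun i i' h => hinj ((div_left_inj' (hf0 j)).mp h), card_univ, hcard]
  calc ∑ i, f i = f j * ∑ i, f i / f j := by
        rw [mul_sum]; exact sum_congr rfl fun i _ => (mul_div_cancel₀ _ (hf0 j)).symm
    _ = f j * ∑ x ∈ univ.image (f · / f j), x := by
        rw [sum_image fun i _ i' _ h => hinj ((div_left_inj' (hf0 j)).mp h)]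
    _ = 0 := by rw [hratio, (hf i₁ j hi₁).sum_nthRootsFinset_eq_zero hn, mul_zero]

theorem Polynomial.coeff_sum_X_pow {R : Type*} [Semiring R] {ι : Type*} [Fintype ι]
    (a : ι → ℕ) (m : ℕ) : (∑ k, X ^ a k : R[X]).coeff m = #{k | a k = m} := by
  simp [coeff_X_pow, eq_comm]

variable {P N : ℕ} [hP : Fact P.Prime]

theorem Polynomial.exists_eq_cyclotomic_mul_of_aeval_eq_zero {K : Type*} [Field K] [CharZero K]
    {ζ : K} (hζ : IsPrimitiveRoot ζ (P ^ (N + 1))) {Q : ℤ[X]}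
    (hdeg : Q.natDegree < P ^ (N + 1)) (hQ : aeval ζ Q = 0) :
    ∃ R : ℤ[X], Q = cyclotomic (P ^ (N + 1)) ℤ * R ∧ R.natDegree < P ^ N := by
  have hpos : 0 < P ^ (N + 1) := pow_pos hP.out.pos _
  obtain ⟨R, rfl⟩ : cyclotomic (P ^ (N + 1)) ℤ ∣ Q := by
    rw [cyclotomic_eq_minpoly hζ hpos]
    exact minpoly.isIntegrallyClosed_dvd (hζ.isIntegral hpos) hQ
  refine ⟨R, rfl, ?_⟩
  rcases eq_or_ne R 0 with rfl | hR
  · simp [pow_pos hP.out.pos]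
  rw [natDegree_mul (cyclotomic_ne_zero _ ℤ) hR, natDegree_cyclotomic,
    Nat.totient_prime_pow_succ hP.out, pow_succ, Nat.mul_sub_one] at hdeg
  have : P ^ N ≤ P ^ N * P := Nat.le_mul_of_pos_right _ hP.out.pos
  omega

theorem Polynomial.coeff_cyclotomic_prime_pow_mul {A : Type*} [CommRing A] {R : A[X]}
    (hR : R.natDegree < P ^ N) {r v : ℕ} (hr : r < P ^ N) (hv : v < P) :
    (cyclotomic (P ^ (N + 1)) A * R).coeff (r + P ^ N * v) = R.coeff r := by
  have key : (X ^ P ^ N - 1) * (cyclotomic (P ^ (N + 1)) A * R) = (X ^ P ^ (N + 1) - 1) * R := by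
    rw [← cyclotomic_prime_pow_mul_X_pow_sub_one]; ring
  have step : ∀ j, j + P ^ N < P ^ (N + 1) →
      (cyclotomic (P ^ (N + 1)) A * R).coeff (j + P ^ N) =
        (cyclotomic (P ^ (N + 1)) A * R).coeff j := by
    intro j hj
    have := congrArg (coeff · (j + P ^ N)) key
    simp only [sub_mul, one_mul, coeff_sub, coeff_X_pow_mul', if_neg hj.not_ge,
      coeff_eq_zero_of_natDegree_lt (hR.trans_le (Nat.le_add_left _ j))] at this
    exact (sub_eq_zero.mp (by simpa using this)).symm
  induction v with
  | zero =>
    have := congrArg (coeff · r) key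
    simp only [sub_mul, one_mul, coeff_sub, coeff_X_pow_mul', if_neg (not_le.mpr hr),
      if_neg (not_le.mpr (hr.trans_le (Nat.pow_le_pow_right hP.out.pos N.le_succ)))] at this
    simpa using this
  | succ v ih =>
    rw [mul_add_one, ← add_assoc, step _ ?_, ih (by omega)]
    calc r + P ^ N * v + P ^ N < P ^ N * (v + 2) := by linarith
      _ ≤ P ^ N * P := Nat.mul_le_mul_left _ hv
      _ = P ^ (N + 1) := (pow_succ _ _).symm

theorem IsPrimitiveRoot.card_fiber_periodic_of_sum_pow_eq_zero {K : Type*} [Field K] [CharZero K]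
    {ζ : K} (hζ : IsPrimitiveRoot ζ (P ^ (N + 1))) {ι : Type*} [Fintype ι]
    (hcard : Fintype.card ι = P) {a : ι → ℕ} (ha : ∀ i, a i < P ^ (N + 1))
    (hsum : ∑ i, ζ ^ a i = 0) :
    (∀ m < P ^ (N + 1), #{k | a k = m} = #{k | a k = m % P ^ N}) ∧
      ∑ r ∈ range (P ^ N), #{k | a k = r} = 1 := by
  classical
  have hd : 0 < P ^ N := pow_pos hP.out.pos N
  have hdeg : (∑ k, X ^ a k : ℤ[X]).natDegree < P ^ (N + 1) :=
    (natDegree_sum_le_of_forall_le _ _ fun k _ =>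
      (natDegree_X_pow_le _).trans (Nat.le_pred_of_lt (ha k))).trans_lt
      (Nat.pred_lt (pow_pos hP.out.pos _).ne')
  obtain ⟨R, hFR, hR⟩ :=
    Polynomial.exists_eq_cyclotomic_mul_of_aeval_eq_zero hζ hdeg (by simpa using hsum)
  have hcount : ∀ m < P ^ (N + 1), (#{k | a k = m} : ℤ) = R.coeff (m % P ^ N) := by
    intro m hm
    rw [← coeff_sum_X_pow, hFR, ← coeff_cyclotomic_prime_pow_mul hR
      (Nat.mod_lt _ hd) (Nat.div_lt_of_lt_mul (by rw [← pow_succ]; exact hm)), Nat.mod_add_div]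
  have hlt : ∀ r < P ^ N, r < P ^ (N + 1) :=
    fun r hr => hr.trans (Nat.pow_lt_pow_succ hP.out.one_lt)
  refine ⟨fun m hm => ?_, ?_⟩
  · have := hcount (m % P ^ N) (hlt _ (Nat.mod_lt _ hd))
    rw [Nat.mod_mod] at this
    exact_mod_cast (hcount m hm).trans this.symm
  · have h1 : (∑ k, X ^ a k : ℤ[X]).eval 1 = P := by simp [eval_finsetSum, hcard]
    rw [hFR, eval_mul, eval_one_cyclotomic_prime_pow, eval_eq_sum_range' hR] at h1
    have hR1 : ∑ r ∈ range (P ^ N), R.coeff r = 1 := by simpa [hP.out.ne_zero] using h1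
    have : ∑ r ∈ range (P ^ N), (#{k | a k = r} : ℤ) = 1 := by
      rw [← hR1]
      refine sum_congr rfl fun r hr => ?_
      rw [hcount r (hlt _ (mem_range.mp hr)), Nat.mod_eq_of_lt (mem_range.mp hr)]
    exact_mod_cast this

theorem IsPrimitiveRoot.modEq_and_ne_of_sum_pow_eq_zero {K : Type*} [Field K] [CharZero K]
    {ζ : K} (hζ : IsPrimitiveRoot ζ (P ^ (N + 1))) {ι : Type*} [Fintype ι]
    (hcard : Fintype.card ι = P) {a : ι → ℕ} (ha : ∀ i, a i < P ^ (N + 1))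
    (hsum : ∑ i, ζ ^ a i = 0) {i j : ι} (hij : i ≠ j) :
    a i ≡ a j [MOD P ^ N] ∧ a i ≠ a j := by
  classical
  obtain ⟨hper, hsum1⟩ := hζ.card_fiber_periodic_of_sum_pow_eq_zero hcard ha hsum
  have hmem : ∀ k, a k % P ^ N ∈ range (P ^ N) :=
    fun k => mem_range.mpr (Nat.mod_lt _ (pow_pos hP.out.pos N))
  have hpos : ∀ k, 0 < #{l | a l = a k % P ^ N} :=
    fun k => hper _ (ha k) ▸ card_pos.mpr ⟨k, by simp⟩
  constructor
  · by_contra hne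
    have := add_le_sum (f := fun r => #{l | a l = r}) (fun _ _ => Nat.zero_le _)
      (hmem i) (hmem j) hne
    have := hpos i
    have := hpos j
    omega
  · intro heq
    have htwo : 2 ≤ #{l | a l = a i} := by
      rw [← card_pair hij]
      refine card_le_card fun l hl => ?_
      simp only [mem_insert, mem_singleton] at hl
      rcases hl with rfl | rfl <;> simp [heq]
    have := single_le_sum (f := fun r => #{l | a l = r}) (fun _ _ => Nat.zero_le _) (hmem i)
    rw [hper _ (ha i)] at htwo
    omega

theorem Complex.isPrimitiveRoot_div_of_sum_eq_zero {ι : Type*} [Fintype ι]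
    (hcard : Fintype.card ι = P) {f : ι → ℂ} (hf : ∀ i, f i ^ P ^ N = 1)
    (hsum : ∑ i, f i = 0) {i j : ι} (hij : i ≠ j) : IsPrimitiveRoot (f i / f j) P := by
  obtain _ | N := N
  · simp only [pow_zero, pow_one] at hf
    simp [hf, hcard, hP.out.ne_zero] at hsum
  have hn : P ^ (N + 1) ≠ 0 := pow_ne_zero _ hP.out.ne_zero
  have : NeZero (P ^ (N + 1)) := ⟨hn⟩
  obtain ⟨ζ, hζ⟩ : ∃ ζ : ℂ, IsPrimitiveRoot ζ (P ^ (N + 1)) :=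
    ⟨_, Complex.isPrimitiveRoot_exp _ hn⟩
  choose a ha hfa using fun i => hζ.eq_pow_of_pow_eq_one (hf i)
  obtain ⟨hmod, hne⟩ :=
    hζ.modEq_and_ne_of_sum_pow_eq_zero hcard ha (by simpa only [hfa] using hsum) hij
  rw [← hfa, ← hfa, IsPrimitiveRoot.iff_orderOf, orderOf_eq_prime_iff, div_pow, ← pow_mul,
    ← pow_mul, Ne, div_eq_one_iff_eq (pow_ne_zero _ (hζ.ne_zero hn)),
    div_eq_one_iff_eq (pow_ne_zero _ (hζ.ne_zero hn))]
  refine ⟨?_, fun h => hne (hζ.pow_inj (ha i) (ha j) h)⟩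
  have hmodP : a i * P ≡ a j * P [MOD P ^ (N + 1)] := by
    rw [pow_succ]; exact hmod.mul_right' P
  have hζmod : ∀ m, ζ ^ m = ζ ^ (m % P ^ (N + 1)) := fun m => by
    rw [hζ.eq_orderOf, pow_mod_orderOf]
  rw [hζmod, hmodP, ← hζmod]

end VanishingSums

namespace PadicTiling

variable (p : ℕ) [hp : Fact p.Prime]

theorem _root_.PadicInt.norm_sub_val_toZModPow_le (y : ℤ_[p]) (k : ℕ) :
    ‖y - ((PadicInt.toZModPow k y).val : ℤ_[p])‖ ≤ (p : ℝ) ^ (-(k : ℤ)) := by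
  have : NeZero (p ^ k) := ⟨pow_ne_zero _ hp.out.ne_zero⟩
  refine (PadicInt.norm_le_pow_iff_mem_span_pow _ k).2 ?_
  rw [← PadicInt.ker_toZModPow, RingHom.mem_ker, map_sub, map_natCast, ZMod.natCast_zmod_val,
    sub_self]

theorem norm_mul_pow_neg_valuation_le_one (x : ℚ_[p]) :
    ‖x * (p : ℚ_[p]) ^ (-x.valuation).toNat‖ ≤ 1 := by
  rcases eq_or_ne x 0 with rfl | hx
  · simp
  rw [norm_mul, Padic.norm_eq_zpow_neg_valuation hx, Padic.norm_p_pow,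
    ← zpow_add₀ (by exact_mod_cast hp.out.ne_zero)]
  exact zpow_le_one_of_nonpos₀ (by exact_mod_cast hp.out.one_lt.le) (by omega)

theorem exists_padicFract_eq (x : ℚ_[p]) : ∃ m k : ℕ, m < p ^ k ∧
    padicFract p x = m / p ^ k ∧ ‖x - (m : ℚ_[p]) / p ^ k‖ ≤ 1 := by
  set k := (-x.valuation).toNat
  set y : ℤ_[p] := ⟨x * p ^ k, norm_mul_pow_neg_valuation_le_one p x⟩
  have : NeZero (p ^ k) := ⟨pow_ne_zero _ hp.out.ne_zero⟩
  refine ⟨(PadicInt.toZModPow k y).val, k, ZMod.val_lt _, rfl, ?_⟩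
  have hpk : (0 : ℝ) < p ^ (-(k : ℤ)) := zpow_pos (by exact_mod_cast hp.out.pos) _
  have hy := PadicInt.norm_sub_val_toZModPow_le p y k
  rw [PadicInt.norm_def] at hy
  push_cast at hy
  rwa [← div_le_one hpk, ← Padic.norm_p_pow, ← norm_div, sub_div,
    mul_div_cancel_right₀ _ (pow_ne_zero _ (by exact_mod_cast hp.out.ne_zero))] at hy

theorem exists_int_eq_div_of_norm_le_one {m : ℤ} {k : ℕ}
    (h : ‖(m : ℚ_[p]) / p ^ k‖ ≤ 1) :
    ∃ n : ℤ, (m : ℚ) / p ^ k = n := by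
  have hpk : (0 : ℝ) < p ^ (-(k : ℤ)) := zpow_pos (by exact_mod_cast hp.out.pos) _
  rw [norm_div, Padic.norm_p_pow, div_le_one hpk] at h
  obtain ⟨n, rfl⟩ := (Padic.norm_int_le_pow_iff_dvd m k).1 h
  refine ⟨n, ?_⟩
  push_cast
  exact mul_div_cancel_left₀ _ (pow_ne_zero _ (by exact_mod_cast hp.out.ne_zero))

theorem padicChar_eq_of_norm_sub_le_one {x : ℚ_[p]} {m : ℤ} {k : ℕ}
    (h : ‖x - (m : ℚ_[p]) / p ^ k‖ ≤ 1) :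
    padicChar p x = Complex.exp (2 * Real.pi * Complex.I * ((m : ℂ) / p ^ k)) := by
  obtain ⟨m', k', -, hfr, hx⟩ := exists_padicFract_eq p x
  have hp0 : (p : ℚ_[p]) ≠ 0 := by exact_mod_cast hp.out.ne_zero
  have hdiff : ‖((m' * p ^ k - m * p ^ k' : ℤ) : ℚ_[p]) / p ^ (k' + k)‖ ≤ 1 :=
    calc _ = ‖(x - (m : ℚ_[p]) / p ^ k) + ((m' : ℚ_[p]) / p ^ k' - x)‖ := by
          congr 1; push_cast; field_simp; ring
      _ ≤ 1 := (Padic.nonarchimedean _ _).trans (max_le h (by rwa [norm_sub_rev]))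
  obtain ⟨n, hn⟩ := exists_int_eq_div_of_norm_le_one p hdiff
  have hq : (m' : ℚ) / p ^ k' = m / p ^ k + n := by
    rw [← hn]
    have : (p : ℚ) ≠ 0 := by exact_mod_cast hp.out.ne_zero
    push_cast; field_simp; ring
  rw [padicChar, hfr, Complex.exp_eq_exp_iff_exists_int]
  refine ⟨n, ?_⟩
  have := congrArg (Rat.cast : ℚ → ℂ) hq
  push_cast at this ⊢
  rw [this]
  ring

def padicAddChar : AddChar ℚ_[p] ℂ where
  toFun := padicChar p
  map_zero_eq_one' := by
    simpa using padicChar_eq_of_norm_sub_le_one p (x := 0) (m := 0) (k := 0) (by simp)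
  map_add_eq_mul' x y := by
    obtain ⟨m, k, -, hfx, hx⟩ := exists_padicFract_eq p x
    obtain ⟨m', k', -, hfy, hy⟩ := exists_padicFract_eq p y
    have hp0 : (p : ℚ_[p]) ≠ 0 := by exact_mod_cast hp.out.ne_zero
    rw [padicChar_eq_of_norm_sub_le_one p (m := m * p ^ k' + m' * p ^ k) (k := k + k'),
      padicChar, padicChar, hfx, hfy, ← Complex.exp_add]
    · have : (p : ℂ) ≠ 0 := by exact_mod_cast hp.out.ne_zero
      congr 1
      push_cast
      field_simp
      ring
    · calc _ = ‖(x - (m : ℚ_[p]) / p ^ k) + (y - (m' : ℚ_[p]) / p ^ k')‖ := by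
            congr 1; push_cast; field_simp; ring
        _ ≤ 1 := (Padic.nonarchimedean _ _).trans (max_le hx hy)

@[simp]
theorem padicAddChar_apply (x : ℚ_[p]) : padicAddChar p x = padicChar p x := rfl

theorem padicAddChar_eq_one_iff {x : ℚ_[p]} : padicAddChar p x = 1 ↔ ‖x‖ ≤ 1 := by
  obtain ⟨m, k, hm, hfr, hx⟩ := exists_padicFract_eq p x
  refine ⟨fun h => ?_, fun h => ?_⟩
  · rw [padicAddChar_apply, padicChar, hfr, Complex.exp_eq_one_iff] at h
    obtain ⟨n, hn⟩ := h
    have hpk : (p : ℂ) ^ k ≠ 0 := pow_ne_zero _ (by exact_mod_cast hp.out.ne_zero)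
    have hmn : (m : ℤ) = n * p ^ k := by
      have : (m : ℂ) / p ^ k = n := by
        push_cast at hn
        exact mul_left_cancel₀ Complex.two_pi_I_ne_zero (by rw [hn]; ring)
      rw [div_eq_iff hpk] at this
      exact_mod_cast this
    have hdvd : p ^ k ∣ m := by
      rw [← Int.natCast_dvd_natCast]; push_cast; exact ⟨n, by rw [hmn]; ring⟩
    rw [Nat.eq_zero_of_dvd_of_lt hdvd hm] at hx
    simpa using hx
  · simpa using padicChar_eq_of_norm_sub_le_one p (m := 0) (k := 0) (by simpa using h)

theorem padicAddChar_pow_eq_one_iff (n : ℕ) (x : ℚ_[p]) :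
    padicAddChar p x ^ n = 1 ↔ ‖(n : ℚ_[p]) * x‖ ≤ 1 := by
  rw [← AddChar.map_nsmul_eq_pow, nsmul_eq_mul, padicAddChar_eq_one_iff]

theorem padicAddChar_pow_eq_one_of_norm_le {x : ℚ_[p]} {N : ℕ} (h : ‖x‖ ≤ p ^ N) :
    padicAddChar p x ^ p ^ N = 1 := by
  rw [padicAddChar_pow_eq_one_iff, Nat.cast_pow, norm_mul, norm_pow, Padic.norm_p, inv_pow,
    inv_mul_le_iff₀ (pow_pos (by exact_mod_cast hp.out.pos) N), mul_one]
  exact h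

theorem norm_eq_iff_isPrimitiveRoot_padicAddChar (x : ℚ_[p]) :
    ‖x‖ = p ↔ IsPrimitiveRoot (padicAddChar p x) p := by
  have hp0 : (0 : ℝ) < p := by exact_mod_cast hp.out.pos
  have hgap : 1 < ‖x‖ ↔ p ≤ ‖x‖ := by
    simpa using (Padic.norm_le_pow_iff_norm_lt_pow_add_one x 0).not
  rw [IsPrimitiveRoot.iff_orderOf, orderOf_eq_prime_iff, padicAddChar_pow_eq_one_iff, Ne,
    padicAddChar_eq_one_iff, norm_mul, Padic.norm_p, inv_mul_le_iff₀ hp0, mul_one, not_le, hgap]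
  exact ⟨fun h => ⟨h.le, h.ge⟩, fun h => le_antisymm h.1 h.2⟩

/-- For a set `S ⊆ ℤ_p` of exactly `p` points, the exponential sum
`μ̂_S(ξ) = ∑_{s ∈ S} e^{-2πi {s ξ}}` vanishes iff `|(s - s')ξ|_p = p` for all distinct
`s, s' ∈ S`. -/
theorem dirac_sum_fourier_vanishes_iff (S : Finset ℤ_[p]) (hS : S.card = p) (ξ : ℚ_[p]) :
    (∑ s ∈ S, Complex.exp (-(2 * Real.pi * Complex.I
        * (padicFract p ((s : ℚ_[p]) * ξ) : ℂ)))) = 0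
      ↔ ∀ s ∈ S, ∀ s' ∈ S, s ≠ s' → ‖((s : ℚ_[p]) - (s' : ℚ_[p])) * ξ‖ = p := by
  have hterm : ∀ s : ℤ_[p], Complex.exp (-(2 * Real.pi * Complex.I
      * (padicFract p ((s : ℚ_[p]) * ξ) : ℂ))) = padicAddChar p (-(s * ξ)) := fun s => by
    rw [AddChar.map_neg_eq_inv, padicAddChar_apply, padicChar, Complex.exp_neg]
  have hratio : ∀ s s' : ℤ_[p], padicAddChar p (-(s * ξ)) / padicAddChar p (-(s' * ξ))
      = padicAddChar p (-((s - s') * ξ)) := fun s s' => by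
    rw [← AddChar.map_sub_eq_div]; congr 1; ring
  obtain ⟨N, hN⟩ := pow_unbounded_of_one_lt ‖ξ‖ (Nat.one_lt_cast.mpr hp.out.one_lt)
  have hroot : ∀ s : S, padicAddChar p (-(s * ξ)) ^ p ^ N = 1 := fun s => by
    refine padicAddChar_pow_eq_one_of_norm_le p ?_
    rw [norm_neg, norm_mul]
    exact (mul_le_of_le_one_left (norm_nonneg _) (PadicInt.norm_le_one _)).trans hN.le
  have hcard : Fintype.card S = p := by simpa using hS
  rw [Finset.sum_congr rfl fun s _ => hterm s, ← Finset.sum_coe_sort S]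
  constructor
  · intro hsum s hs s' hs' hne
    have := Complex.isPrimitiveRoot_div_of_sum_eq_zero hcard hroot hsum
      (i := ⟨s, hs⟩) (j := ⟨s', hs'⟩) (by simpa using hne)
    rwa [hratio, ← norm_eq_iff_isPrimitiveRoot_padicAddChar, norm_neg] at this
  · intro h
    refine sum_eq_zero_of_forall_isPrimitiveRoot_div hp.out.one_lt hcard fun s s' hne => ?_
    rw [hratio, ← norm_eq_iff_isPrimitiveRoot_padicAddChar, norm_neg]
    exact h s s.2 s' s'.2 (Subtype.coe_ne_coe.mpr hne)

end PadicTiling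
end
end

section
/- Let T ⊂ ℤ_p be a finite set with at least two elements and let γ_T := max over distinct t, t′ ∈ T of −log_p(|t − t′|_p). Then for every ξ ∈ ℚ_p with |ξ|_p > p^{γ_T + 1}, the exponential sum μ̂_T(ξ) = ∑_{t∈T} e^{−2πi{tξ}} is nonzero. -/
/-!
Choose `N` with `|ξ|_p = p^N`, so that `η = ξ p^N` is a `p`-adic unit. Modulo integers
`{tξ} ≡ c_t / p^N` with `c_t ≡ tη (mod p^N)`, so each term of the sum is `ζ^{c_t}` for a fixed
primitive `p^N`-th root of unity `ζ`. As `N - 1 > γ_T`, the exponents `c_t` are pairwise distinct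
modulo `p^(N-1)`. A vanishing sum would make `Φ_{p^N} = ∑_{i<p} X^{i p^(N-1)}` divide `∑ X^{c_t}`;
but sending `X` to the generator of the group algebra `𝔽_p[ℤ/p^(N-1)]` kills `Φ_{p^N}` and maps
`∑ X^{c_t}` to a sum of distinct group elements, which is nonzero.
-/

open MeasureTheory Complex

noncomputable section

namespace PadicTiling

variable (p : ℕ) [hp : Fact p.Prime]

/-- `γ_T := max_{t ≠ t' ∈ T} (-log_p |t - t'|_p)`, the largest valuation of a difference of
two distinct elements of `T`. -/
def gammaT (T : Finset ℤ_[p]) (hT : 1 < T.card) : ℤ :=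
  letI := Classical.decEq ℤ_[p]
  T.offDiag.sup'
    (Finset.card_pos.mp (by
      rw [Finset.offDiag_card]
      have h2 : 2 * T.card ≤ T.card * T.card := Nat.mul_le_mul_right _ hT
      omega))
    fun tt => (tt.1 - tt.2).valuation

end PadicTiling

namespace PadicInt

variable {p : ℕ} [Fact p.Prime]

theorem toZModPow_eq_iff_norm_sub_le {n : ℕ} {z z' : ℤ_[p]} :
    toZModPow n z = toZModPow n z' ↔ ‖z - z'‖ ≤ (p : ℝ) ^ (-n : ℤ) := by
  rw [← sub_eq_zero, ← map_sub, ← RingHom.mem_ker, ker_toZModPow, norm_le_pow_iff_mem_span_pow]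

theorem norm_sub_val_toZModPow_le_s6 (n : ℕ) (z : ℤ_[p]) :
    ‖z - ((toZModPow n z).val : ℤ_[p])‖ ≤ (p : ℝ) ^ (-n : ℤ) := by
  rw [← toZModPow_eq_iff_norm_sub_le, map_natCast, ZMod.natCast_zmod_val]

theorem natCast_val_toZModPow {k n : ℕ} (h : k ≤ n) (z : ℤ_[p]) :
    ((toZModPow n z).val : ZMod (p ^ k)) = toZModPow k z := by
  rw [ZMod.natCast_val, ← ZMod.castHom_apply (h := pow_dvd_pow p h), ← RingHom.comp_apply,
    zmod_cast_comp_toZModPow k n h]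

end PadicInt

namespace Padic

variable {p : ℕ} [hp : Fact p.Prime]

theorem norm_intCast_div_pow_le_one_iff (k : ℤ) (N : ℕ) :
    ‖(k : ℚ_[p]) / (p : ℚ_[p]) ^ N‖ ≤ 1 ↔ (p ^ N : ℤ) ∣ k := by
  rw [← norm_int_le_pow_iff_dvd, norm_div, norm_p_pow,
    div_le_iff₀ (zpow_pos (Nat.cast_pos.2 hp.out.pos) _), one_mul]

theorem exists_intCast_eq_of_norm_le_one {q : ℚ} {N : ℕ} {k : ℤ} (hk : q * p ^ N = k)
    (hq : ‖(q : ℚ_[p])‖ ≤ 1) : ∃ n : ℤ, q = n := by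
  have hq' : q = k / p ^ N := by
    rw [← hk, mul_div_cancel_right₀ _ (pow_ne_zero _ (Nat.cast_ne_zero.2 hp.out.ne_zero))]
  obtain ⟨n, rfl⟩ := (norm_intCast_div_pow_le_one_iff (p := p) k N).1 (by simpa [hq'] using hq)
  refine ⟨n, ?_⟩
  rw [hq']
  push_cast
  exact mul_div_cancel_left₀ _ (pow_ne_zero _ (Nat.cast_ne_zero.2 hp.out.ne_zero))

theorem norm_mul_pow_eq_one {ξ : ℚ_[p]} {N : ℕ} (h : ‖ξ‖ = (p : ℝ) ^ (N : ℤ)) :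
    ‖ξ * (p : ℚ_[p]) ^ N‖ = 1 := by
  rw [norm_mul, h, norm_p_pow, zpow_neg,
    mul_inv_cancel₀ (zpow_ne_zero _ (Nat.cast_ne_zero.2 hp.out.ne_zero))]

theorem norm_sub_val_toZModPow_div_pow_le_one {x : ℚ_[p]} {N : ℕ} {z : ℤ_[p]}
    (hz : (z : ℚ_[p]) = x * p ^ N) :
    ‖x - ((PadicInt.toZModPow N z).val : ℚ_[p]) / (p : ℚ_[p]) ^ N‖ ≤ 1 := by
  have hpN : (p : ℚ_[p]) ^ N ≠ 0 := pow_ne_zero _ (Nat.cast_ne_zero.2 hp.out.ne_zero)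
  have hsub : x - ((PadicInt.toZModPow N z).val : ℚ_[p]) / (p : ℚ_[p]) ^ N =
      ((z - ((PadicInt.toZModPow N z).val : ℤ_[p]) : ℤ_[p]) : ℚ_[p]) / (p : ℚ_[p]) ^ N := by
    rw [PadicInt.coe_sub, hz, PadicInt.coe_natCast, sub_div, mul_div_cancel_right₀ _ hpN]
  rw [hsub, norm_div, norm_p_pow, div_le_one (zpow_pos (Nat.cast_pos.2 hp.out.pos) _),
    ← PadicInt.norm_def]
  exact PadicInt.norm_sub_val_toZModPow_le_s6 N z

end Padic

section RootsOfUnity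

open Polynomial

variable {p : ℕ} [hp : Fact p.Prime]

lemma aeval_single_one_cyclotomic_prime_pow (M : ℕ) :
    aeval (AddMonoidAlgebra.single (1 : ZMod (p ^ M)) (1 : ZMod p))
      (cyclotomic (p ^ (M + 1)) ℤ) = 0 := by
  have hX : (AddMonoidAlgebra.single (1 : ZMod (p ^ M)) (1 : ZMod p)) ^ p ^ M = 1 := by
    rw [AddMonoidAlgebra.single_pow, nsmul_one, ZMod.natCast_self, one_pow,
      AddMonoidAlgebra.one_def]
  simp only [cyclotomic_prime_pow_eq_geom_sum hp.out, map_sum, map_pow, aeval_X, hX, one_pow,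
    Finset.sum_const, Finset.card_range]
  rw [nsmul_eq_mul, mul_one,
    ← map_natCast (algebraMap (ZMod p) (AddMonoidAlgebra (ZMod p) (ZMod (p ^ M)))),
    ZMod.natCast_self, map_zero]

lemma IsPrimitiveRoot.sum_pow_ne_zero_of_injOn {K : Type*} [Field K] [CharZero K] {M : ℕ} {ζ : K}
    (hζ : IsPrimitiveRoot ζ (p ^ (M + 1))) {ι : Type*} {T : Finset ι} (hT : T.Nonempty)
    {f : ι → ℕ} (hf : Set.InjOn (fun t => (f t : ZMod (p ^ M))) T) :
    ∑ t ∈ T, ζ ^ f t ≠ 0 := by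
  classical
  intro hsum
  have hpos : 0 < p ^ (M + 1) := pow_pos hp.out.pos _
  have hdvd : cyclotomic (p ^ (M + 1)) ℤ ∣ ∑ t ∈ T, (X : ℤ[X]) ^ f t := by
    rw [cyclotomic_eq_minpoly hζ hpos]
    exact minpoly.isIntegrallyClosed_dvd (hζ.isIntegral hpos) (by simpa using hsum)
  obtain ⟨Q, hQ⟩ := hdvd
  have hzero := congrArg (aeval (AddMonoidAlgebra.single (1 : ZMod (p ^ M)) (1 : ZMod p))) hQ
  simp only [map_mul, aeval_single_one_cyclotomic_prime_pow, zero_mul, map_sum, map_pow, aeval_X,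
    AddMonoidAlgebra.single_pow, nsmul_one, one_pow] at hzero
  obtain ⟨t₀, ht₀⟩ := hT
  have hcoeff := congrArg (fun g => AddMonoidAlgebra.coeff g (f t₀ : ZMod (p ^ M))) hzero
  simp only [AddMonoidAlgebra.coeff_sum, AddMonoidAlgebra.coeff_single, Finset.sum_apply',
    Finsupp.single_apply, AddMonoidAlgebra.coeff_zero, Finsupp.coe_zero, Pi.zero_apply] at hcoeff
  have hsingle : ∀ t ∈ T, (if (f t : ZMod (p ^ M)) = f t₀ then (1 : ZMod p) else 0) =
      if t = t₀ then 1 else 0 := fun t ht =>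
    if_congr ⟨fun h => hf ht ht₀ h, fun h => h ▸ rfl⟩ rfl rfl
  rw [Finset.sum_congr rfl hsingle, Finset.sum_ite_eq' T t₀, if_pos ht₀] at hcoeff
  exact one_ne_zero hcoeff

end RootsOfUnity

namespace PadicTiling

variable (p : ℕ) [hp : Fact p.Prime]

theorem norm_sub_padicFract_le_one (x : ℚ_[p]) : ‖x - (padicFract p x : ℚ_[p])‖ ≤ 1 := by
  rw [padicFract]
  push_cast
  exact Padic.norm_sub_val_toZModPow_div_pow_le_one rfl

theorem exists_padicFract_sub_val_toZModPow_div_pow_eq_intCast (x : ℚ_[p]) {N : ℕ} {z : ℤ_[p]}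
    (hz : (z : ℚ_[p]) = x * p ^ N) :
    ∃ k : ℤ, padicFract p x - ((PadicInt.toZModPow N z).val : ℚ) / (p : ℚ) ^ N = k := by
  set c := (PadicInt.toZModPow N z).val
  set m := (-x.valuation).toNat
  obtain ⟨a, hfr⟩ : ∃ a : ℕ, padicFract p x = a / (p : ℚ) ^ m := ⟨_, rfl⟩
  have hp0 : (p : ℚ) ≠ 0 := Nat.cast_ne_zero.2 hp.out.ne_zero
  refine Padic.exists_intCast_eq_of_norm_le_one (p := p) (N := m + N)
    (k := a * p ^ N - c * p ^ m) ?_ ?_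
  · rw [hfr]
    field_simp
    push_cast
    ring
  · have hsub : ((padicFract p x - (c : ℚ) / (p : ℚ) ^ N : ℚ) : ℚ_[p]) =
        (padicFract p x - x) + (x - (c : ℚ_[p]) / (p : ℚ_[p]) ^ N) := by
      push_cast
      ring
    rw [hsub]
    exact (IsUltrametricDist.norm_add_le_max _ _).trans
      (max_le (norm_sub_rev x _ ▸ norm_sub_padicFract_le_one p x)
        (Padic.norm_sub_val_toZModPow_div_pow_le_one hz))

theorem exp_neg_padicFract_eq_pow (x : ℚ_[p]) {N : ℕ} {z : ℤ_[p]} (hz : (z : ℚ_[p]) = x * p ^ N) :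
    Complex.exp (-(2 * Real.pi * Complex.I * (padicFract p x : ℂ))) =
      (Complex.exp (2 * Real.pi * Complex.I / (p : ℂ) ^ N))⁻¹ ^ (PadicInt.toZModPow N z).val := by
  obtain ⟨k, hk⟩ := exists_padicFract_sub_val_toZModPow_div_pow_eq_intCast p x hz
  rw [eq_add_of_sub_eq hk, ← Complex.exp_neg, ← Complex.exp_nat_mul]
  have harg : -(2 * Real.pi * Complex.I * (((k + (PadicInt.toZModPow N z).val / p ^ N : ℚ)) : ℂ)) =
      (PadicInt.toZModPow N z).val * -(2 * Real.pi * Complex.I / (p : ℂ) ^ N) +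
        (-k : ℤ) * (2 * Real.pi * Complex.I) := by
    push_cast
    ring
  rw [harg, Complex.exp_add, Complex.exp_int_mul_two_pi_mul_I, mul_one]

variable {p}

theorem valuation_sub_le_gammaT {T : Finset ℤ_[p]} (hT : 1 < T.card) {t t' : ℤ_[p]} (ht : t ∈ T)
    (ht' : t' ∈ T) (hne : t ≠ t') : ((t - t').valuation : ℤ) ≤ gammaT p T hT := by
  classical
  exact Finset.le_sup' (fun tt : ℤ_[p] × ℤ_[p] => ((tt.1 - tt.2).valuation : ℤ))
    ((Finset.mem_offDiag (x := (t, t'))).2 ⟨ht, ht', hne⟩)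

theorem gammaT_nonneg {T : Finset ℤ_[p]} (hT : 1 < T.card) : 0 ≤ gammaT p T hT := by
  obtain ⟨t, ht, t', ht', hne⟩ := Finset.one_lt_card.1 hT
  exact (Int.natCast_nonneg _).trans (valuation_sub_le_gammaT hT ht ht' hne)

theorem zpow_neg_gammaT_le_norm_sub {T : Finset ℤ_[p]} (hT : 1 < T.card) {t t' : ℤ_[p]}
    (ht : t ∈ T) (ht' : t' ∈ T) (hne : t ≠ t') : (p : ℝ) ^ (-gammaT p T hT) ≤ ‖t - t'‖ := by
  rw [PadicInt.norm_eq_zpow_neg_valuation (sub_ne_zero.2 hne)]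
  exact zpow_le_zpow_right₀ (Nat.one_le_cast.2 hp.out.one_le)
    (neg_le_neg (valuation_sub_le_gammaT hT ht ht' hne))

theorem injOn_toZModPow_mul {T : Finset ℤ_[p]} (hT : 1 < T.card) {η : ℤ_[p]} (hη : ‖η‖ = 1)
    {M : ℕ} (hM : gammaT p T hT < M) : Set.InjOn (fun t => PadicInt.toZModPow M (t * η)) T := by
  intro t ht t' ht' heq
  by_contra hne
  rw [PadicInt.toZModPow_eq_iff_norm_sub_le, ← sub_mul, norm_mul, hη, mul_one] at heq
  have hle := (zpow_neg_gammaT_le_norm_sub hT ht ht' hne).trans heq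
  rw [zpow_le_zpow_iff_right₀ (Nat.one_lt_cast.2 hp.out.one_lt)] at hle
  omega

/-- For a finite set `T ⊆ ℤ_p` with at least two elements, the exponential sum
`μ̂_T(ξ) = ∑_{t ∈ T} e^{-2πi {t ξ}}` is nonzero for every `ξ` with `|ξ|_p > p^{γ_T + 1}`. -/
theorem exp_sum_nonzero_of_high_frequency (T : Finset ℤ_[p]) (hT : 1 < T.card) (ξ : ℚ_[p])
    (hξ : (p : ℝ) ^ (gammaT p T hT + 1) < ‖ξ‖) :
    (∑ t ∈ T, Complex.exp (-(2 * Real.pi * Complex.I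
        * (padicFract p ((t : ℚ_[p]) * ξ) : ℂ)))) ≠ 0 := by
  have hp1 : (1 : ℝ) < p := Nat.one_lt_cast.2 hp.out.one_lt
  have hξ0 : ξ ≠ 0 := by
    rintro rfl
    exact (zpow_pos (zero_lt_one.trans hp1) _).not_ge (norm_zero (E := ℚ_[p]) ▸ hξ.le)
  rw [Padic.norm_eq_zpow_neg_valuation hξ0] at hξ
  have hval := (zpow_lt_zpow_iff_right₀ hp1).1 hξ
  have hγ := gammaT_nonneg hT
  obtain ⟨M, hM⟩ : ∃ M : ℕ, -ξ.valuation = (M + 1 : ℕ) := ⟨(-ξ.valuation - 1).toNat, by omega⟩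
  have hη : ‖ξ * (p : ℚ_[p]) ^ (M + 1)‖ = 1 :=
    Padic.norm_mul_pow_eq_one (by rw [Padic.norm_eq_zpow_neg_valuation hξ0, hM])
  set η : ℤ_[p] := ⟨ξ * (p : ℚ_[p]) ^ (M + 1), hη.le⟩
  have hterm (t : ℤ_[p]) := exp_neg_padicFract_eq_pow p ((t : ℚ_[p]) * ξ) (z := t * η)
    (mul_assoc _ _ _).symm
  rw [Finset.sum_congr rfl fun t _ => hterm t]
  refine IsPrimitiveRoot.sum_pow_ne_zero_of_injOn (p := p) (M := M) ?_
    (Finset.card_pos.1 (by omega)) ?_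
  · exact_mod_cast (Complex.isPrimitiveRoot_exp (p ^ (M + 1)) (pow_ne_zero _ hp.out.ne_zero)).inv
  · intro t ht t' ht' h
    simp only [PadicInt.natCast_val_toZModPow M.le_succ] at h
    exact injOn_toZModPow_mul hT hη (by omega) ht ht' h

end PadicTiling
end
end

section
/- Let Ω ⊂ ℤ_p be a Borel set of positive Haar measure. Then Ω is a tile of the group ℤ_p by translation (there exists T ⊂ ℤ_p with ∑_{t∈T} 1_Ω(x−t) = 1 for almost every x ∈ ℤ_p) if and only if Ω is a tile of ℚ_p by translation (there exists T′ ⊂ ℚ_p with ∑_{t∈T′} 1_Ω(x−t) = 1 for almost every x ∈ ℚ_p). -/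
open MeasureTheory Complex

noncomputable section

/-!
`ℤ_p` is an open subgroup of `ℚ_p` with countably many cosets (`ℚ` is dense). As `Ω ⊆ ℤ_p`, the
translate `t + Ω` can only cover points of the coset `t + ℤ_p`. Hence a tiling `T'` of `ℚ_p`
restricts to the tiling `T' ∩ ℤ_p` of `ℤ_p`, and a tiling `T` of `ℤ_p` becomes a tiling `F + T` of
`ℚ_p` for a set `F` of coset representatives: on the coset `f + ℤ_p`, `f ∈ F`, it acts as the
translate `f + T`, so its exceptional set is a countable union of translates of a null set.
-/

section Tiling

open Set MeasureTheory
open scoped Pointwise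

variable {G : Type*} [AddCommGroup G]

def translateCount (Ω T : Set G) (x : G) : ℝ :=
  ∑' t : T, Ω.indicator (fun _ => (1 : ℝ)) (x - t)

theorem translateCount_congr {Ω T S : Set G} {x : G} (h : ∀ t, x - t ∈ Ω → (t ∈ T ↔ t ∈ S)) :
    translateCount Ω T x = translateCount Ω S x := by
  classical
  unfold translateCount
  rw [tsum_subtype T fun t => Ω.indicator _ (x - t), tsum_subtype S fun t => Ω.indicator _ (x - t)]
  congr 1
  ext t
  by_cases hΩ : x - t ∈ Ω
  · simp only [Set.indicator, hΩ, if_true]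
    exact if_congr (h t hΩ) rfl rfl
  · simp only [Set.indicator, hΩ, ite_self, if_false]

theorem translateCount_vadd (Ω T : Set G) (a x : G) :
    translateCount Ω (a +ᵥ T) x = translateCount Ω T (x - a) := by
  unfold translateCount
  rw [← image_vadd,
    tsum_image (fun t => Ω.indicator _ (x - t)) (g := (a +ᵥ ·)) (add_right_injective a).injOn]
  simp only [vadd_eq_add, sub_add_eq_sub_sub]

variable {H : AddSubgroup G} {Ω : Set G}

theorem translateCount_inter_of_mem (hΩ : Ω ⊆ H) (T : Set G) {x : G} (hx : x ∈ H) :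
    translateCount Ω (T ∩ H) x = translateCount Ω T x :=
  translateCount_congr fun t ht => by
    simpa [sub_sub_cancel] using fun _ : t ∈ T => H.sub_mem hx (hΩ ht)

theorem translateCount_range_out_add (hΩ : Ω ⊆ H) {T : Set G} (hT : T ⊆ H) (x : G) :
    translateCount Ω (range (Quotient.out : G ⧸ H → G) + T) x =
      translateCount Ω T (x - (x : G ⧸ H).out) := by
  rw [← translateCount_vadd]
  refine translateCount_congr fun t ht => ⟨?_, ?_⟩
  · rintro ⟨_, ⟨c, rfl⟩, s, hs, rfl⟩
    have : (x : G ⧸ H) = c := by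
      rw [← QuotientAddGroup.out_eq' c, eq_comm, QuotientAddGroup.eq]
      simpa [sub_add_eq_sub_sub, neg_add_eq_sub] using H.add_mem (hΩ ht) (hT hs)
    exact ⟨s, hs, by rw [this]; rfl⟩
  · rintro ⟨s, hs, rfl⟩
    exact ⟨_, ⟨_, rfl⟩, s, hs, rfl⟩

variable [MeasurableSpace G] (μ : Measure G)

theorem ae_translateCount_range_out_add [MeasurableAdd G] [μ.IsAddLeftInvariant]
    [Countable (G ⧸ H)] (hΩ : Ω ⊆ H) {T : Set G} (hT : T ⊆ H)
    (h : ∀ᵐ x ∂μ.restrict H, translateCount Ω T x = 1) :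
    ∀ᵐ x ∂μ, translateCount Ω (range (Quotient.out : G ⧸ H → G) + T) x = 1 := by
  set N := {x | translateCount Ω T x ≠ 1} ∩ H
  have hN : μ N = 0 :=
    nonpos_iff_eq_zero.mp ((Measure.le_restrict_apply _ _).trans_eq (ae_iff.mp h))
  have hcover : {x | translateCount Ω (range (Quotient.out : G ⧸ H → G) + T) x ≠ 1} ⊆
      ⋃ c : G ⧸ H, c.out +ᵥ N := by
    intro x hx
    refine mem_iUnion.mpr ⟨x, x - (x : G ⧸ H).out, ⟨?_, ?_⟩, add_sub_cancel _ _⟩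
    · show translateCount Ω T _ ≠ 1
      rwa [← translateCount_range_out_add hΩ hT]
    · rw [← neg_add_eq_sub]
      exact QuotientAddGroup.eq.mp (QuotientAddGroup.out_eq' _)
  exact measure_mono_null hcover (measure_iUnion_null fun c => by rwa [measure_vadd])

theorem ae_restrict_translateCount_inter (hH : MeasurableSet (H : Set G)) (hΩ : Ω ⊆ H)
    {T : Set G} (h : ∀ᵐ x ∂μ, translateCount Ω T x = 1) :
    ∀ᵐ x ∂μ.restrict H, translateCount Ω (T ∩ H) x = 1 := by
  filter_upwards [ae_restrict_of_ae h, ae_restrict_mem hH] with x hx hxH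
  rwa [translateCount_inter_of_mem hΩ T hxH]

theorem exists_tiling_subgroup_iff_exists_tiling [MeasurableAdd G] [μ.IsAddLeftInvariant]
    [Countable (G ⧸ H)] (hH : MeasurableSet (H : Set G)) (hΩ : Ω ⊆ H) :
    (∃ T ⊆ (H : Set G), ∀ᵐ x ∂μ.restrict H, translateCount Ω T x = 1) ↔
      ∃ T', ∀ᵐ x ∂μ, translateCount Ω T' x = 1 :=
  ⟨fun ⟨_, hT, h⟩ => ⟨_, ae_translateCount_range_out_add μ hΩ hT h⟩,
    fun ⟨T', h⟩ => ⟨T' ∩ H, inter_subset_right, ae_restrict_translateCount_inter μ hH hΩ h⟩⟩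

end Tiling

instance OpenAddSubgroup.countable_quotient {G : Type*} [AddGroup G] [TopologicalSpace G]
    [SeparatelyContinuousAdd G] [TopologicalSpace.SeparableSpace G] (U : OpenAddSubgroup G) :
    Countable (G ⧸ U.toAddSubgroup) :=
  have := QuotientAddGroup.isQuotientMap_mk U.toAddSubgroup |>.separableSpace
  TopologicalSpace.separableSpace_iff_countable.mp this

namespace PadicTiling

variable (p : ℕ) [hp : Fact p.Prime]

instance : (mHaar p).IsAddHaarMeasure := by
  unfold mHaar; infer_instance

theorem Zp_eq_closedBall : Zp p = Metric.closedBall 0 1 := by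
  ext x; simp [Zp]

theorem tile_Zp_iff_tile_Qp (Ω : Set ℚ_[p]) (hΩ : Ω ⊆ Zp p) :
    (∃ T : Set ℚ_[p], T ⊆ Zp p ∧
        ∀ᵐ x ∂ (mHaar p).restrict (Zp p),
          ∑' t : T, Ω.indicator (fun _ => (1 : ℝ)) (x - t) = 1)
      ↔ (∃ T' : Set ℚ_[p],
        ∀ᵐ x ∂ mHaar p, ∑' t : T', Ω.indicator (fun _ => (1 : ℝ)) (x - t) = 1) := by
  let U := IsUltrametricDist.closedBall_openAddSubgroup ℚ_[p] one_pos
  rw [Zp_eq_closedBall] at hΩ ⊢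
  exact exists_tiling_subgroup_iff_exists_tiling (mHaar p) U.isOpen.measurableSet (H := U) hΩ

end PadicTiling
end
end
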